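/- arXiv:1303.1350 — 6 statements merged into one kernel-verified Lean document; each statement's English description precedes it below -/
import Mathlib

section
/- If F(z) = z + Σ_{n≥2} A_n z^n is analytic in the unit disk and Σ_{n≥2} |n A_n - e^{iφ}(n-1) A_{n-1}| ≤ 1 for some real φ, then Re((1 - e^{iφ} z) F'(z)) > 0 for all z in the unit disk. -/
/-!
Put `a n = (n + 1) A_{n+1}`, the Taylor coefficients of `F'`, and `c n = a (n+1) - e^{iφ} a n`.
Multiplying the series of `F'` by `1 - e^{iφ} z` telescopes it to
`(1 - e^{iφ} z) F'(z) = 1 + ∑ c n z^{n+1}`, and the tail has modulus at most `|z| ∑ |c n| < 1`,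
so `(1 - e^{iφ} z) F'(z)` lies in the disk of radius one around `1`. The same telescoping bounds
`|a n|` by `1 + ∑ |c n| ≤ 2`, which justifies differentiating the series of `F` termwise.
-/

open Complex Metric

open Finset in
theorem norm_le_norm_zero_add_sum_norm_sub_mul {R : Type*} [SeminormedRing R] {e : R}
    (he : ‖e‖ ≤ 1) (a : ℕ → R) (n : ℕ) :
    ‖a n‖ ≤ ‖a 0‖ + ∑ k ∈ range n, ‖a (k + 1) - e * a k‖ := by
  induction n with
  | zero => simp
  | succ n ih =>
    calc ‖a (n + 1)‖ = ‖(a (n + 1) - e * a n) + e * a n‖ := by rw [sub_add_cancel]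
      _ ≤ ‖a (n + 1) - e * a n‖ + ‖e‖ * ‖a n‖ :=
        (norm_add_le _ _).trans (by gcongr; exact norm_mul_le _ _)
      _ ≤ ‖a (n + 1) - e * a n‖ + ‖a n‖ := by
        gcongr; exact mul_le_of_le_one_left (norm_nonneg _) he
      _ ≤ ‖a 0‖ + ∑ k ∈ range (n + 1), ‖a (k + 1) - e * a k‖ := by
        rw [sum_range_succ]; linarith

theorem norm_le_norm_zero_add_tsum_norm_sub_mul {R : Type*} [SeminormedRing R] {e : R}
    (he : ‖e‖ ≤ 1) {a : ℕ → R} (ha : Summable fun k => ‖a (k + 1) - e * a k‖) (n : ℕ) :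
    ‖a n‖ ≤ ‖a 0‖ + ∑' k, ‖a (k + 1) - e * a k‖ :=
  (norm_le_norm_zero_add_sum_norm_sub_mul he a n).trans <| by
    gcongr; exact ha.sum_le_tsum _ fun _ _ => norm_nonneg _

theorem HasSum.one_sub_mul_mul_pow {R : Type*} [CommRing R] [TopologicalSpace R]
    [IsTopologicalRing R] {a : ℕ → R} {e z S : R} (h : HasSum (fun n => a n * z ^ n) S) :
    HasSum (fun n => (a (n + 1) - e * a n) * z ^ (n + 1)) ((1 - e * z) * S - a 0) := by
  have htail := (hasSum_nat_add_iff' 1).mpr h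
  simp only [Finset.range_one, Finset.sum_singleton, pow_zero, mul_one] at htail
  rw [show (1 - e * z) * S - a 0 = S - a 0 - e * z * S by ring]
  exact (htail.sub (h.mul_left (e * z))).congr_fun fun n => by ring

theorem HasSum.norm_le_norm_mul_tsum {𝕜 : Type*} [NormedDivisionRing 𝕜] {c : ℕ → 𝕜} {z T : 𝕜}
    (hz : ‖z‖ ≤ 1) (hc : Summable fun n => ‖c n‖) (hT : HasSum (fun n => c n * z ^ (n + 1)) T) :
    ‖T‖ ≤ ‖z‖ * ∑' n, ‖c n‖ := by
  rw [← tsum_mul_left]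
  refine hT.norm_le_of_bounded (hc.mul_left _).hasSum fun n => ?_
  rw [norm_mul, norm_pow, pow_succ, mul_comm ‖z‖]
  gcongr
  exact mul_le_of_le_one_left (norm_nonneg _) (pow_le_one₀ (norm_nonneg _) hz)

theorem hasSum_deriv_of_hasSum_mul_pow {A : ℕ → ℂ} {F : ℂ → ℂ} {C : ℝ} (hA : ∀ n, ‖A n‖ ≤ C)
    (hF : ∀ w ∈ ball (0 : ℂ) 1, HasSum (fun n => A n * w ^ n) (F w)) {z : ℂ}
    (hz : z ∈ ball (0 : ℂ) 1) :
    HasSum (fun n : ℕ => ((n : ℂ) + 1) * A (n + 1) * z ^ n) (deriv F z) := by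
  obtain ⟨r, hzr, hr1⟩ := exists_between (mem_ball_zero_iff.mp hz)
  have hr0 : 0 ≤ r := (norm_nonneg z).trans hzr.le
  have hbound : ∀ n, ∀ w ∈ ball (0 : ℂ) r, ‖A n * w ^ n‖ ≤ C * r ^ n := fun n w hw => by
    rw [norm_mul, norm_pow]
    exact mul_le_mul (hA n) (pow_le_pow_left₀ (norm_nonneg w) (mem_ball_zero_iff.mp hw).le n)
      (by positivity) ((norm_nonneg _).trans (hA n))
  have hderiv := hasSum_deriv_of_summable_norm (F := fun n w => A n * w ^ n)
    ((summable_geometric_of_lt_one hr0 hr1).mul_left C) (fun n => by fun_prop) isOpen_ball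
    hbound (mem_ball_zero_iff.mpr hzr)
  have hFeq : (fun w => ∑' n, A n * w ^ n) =ᶠ[nhds z] F := by
    filter_upwards [isOpen_ball.mem_nhds hz] with w hw using (hF w hw).tsum_eq
  rw [hFeq.deriv_eq] at hderiv
  simpa [deriv_const_mul_field', mul_comm, mul_left_comm, mul_assoc] using
    (hasSum_nat_add_iff' 1).mpr hderiv

theorem re_pos_of_norm_sub_one_lt_one {w : ℂ} (hw : ‖w - 1‖ < 1) : 0 < w.re := by
  have := abs_re_le_norm (w - 1)
  rw [sub_re, one_re] at this
  linarith [neg_abs_le (w.re - 1)]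

theorem stmt_0_general (F : ℂ → ℂ) (A : ℕ → ℂ) (φ : ℝ)
    (hA1 : A 1 = 1)
    (hF : ∀ z ∈ ball (0 : ℂ) 1, HasSum (fun n : ℕ => A n * z ^ n) (F z))
    (hsum : Summable (fun n : ℕ =>
      ‖((n : ℂ) + 2) * A (n + 2) - Complex.exp (φ * Complex.I) * ((n : ℂ) + 1) * A (n + 1)‖))
    (hcoef : (∑' n : ℕ,
      ‖((n : ℂ) + 2) * A (n + 2) - Complex.exp (φ * Complex.I) * ((n : ℂ) + 1) * A (n + 1)‖) ≤ 1) :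
    ∀ z ∈ ball (0 : ℂ) 1,
      0 < ((1 - Complex.exp (φ * Complex.I) * z) * deriv F z).re := by
  intro z hz
  set e := Complex.exp (φ * Complex.I)
  have he : ‖e‖ = 1 := norm_exp_ofReal_mul_I φ
  set a : ℕ → ℂ := fun n => ((n : ℂ) + 1) * A (n + 1)
  have ha0 : a 0 = 1 := by simp [a, hA1]
  have hdiff : (fun n => ‖a (n + 1) - e * a n‖) =
      fun n : ℕ => ‖((n : ℂ) + 2) * A (n + 2) - e * ((n : ℂ) + 1) * A (n + 1)‖ := by
    funext n; congr 1; simp only [a]; push_cast; ring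
  rw [← hdiff] at hsum hcoef
  have ha : ∀ n, ‖a n‖ ≤ 2 := fun n => by
    have := norm_le_norm_zero_add_tsum_norm_sub_mul he.le hsum n
    rw [ha0, norm_one] at this
    linarith
  have hA : ∀ n, ‖A n‖ ≤ max ‖A 0‖ 2 := fun
    | 0 => le_max_left _ _
    | n + 1 => le_max_of_le_right <| (ha n).trans' <| by
        have : (1 : ℝ) ≤ ‖(n : ℂ) + 1‖ := by norm_cast; simp
        simpa [a, norm_mul] using le_mul_of_one_le_left (norm_nonneg _) this
  have hT := (hasSum_deriv_of_hasSum_mul_pow hA hF hz).one_sub_mul_mul_pow (a := a) (e := e)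
  rw [ha0] at hT
  refine re_pos_of_norm_sub_one_lt_one ?_
  calc ‖(1 - e * z) * deriv F z - 1‖ ≤ ‖z‖ * ∑' n, ‖a (n + 1) - e * a n‖ :=
        hT.norm_le_norm_mul_tsum (mem_ball_zero_iff.mp hz).le hsum
    _ ≤ ‖z‖ * 1 := by gcongr
    _ < 1 := by rw [mul_one]; exact mem_ball_zero_iff.mp hz

/-- If `F(z) = z + ∑_{n≥2} A n z^n` is analytic on the unit disk and
`∑_{n≥2} |n A_n - e^{iφ}(n-1) A_{n-1}| ≤ 1`, then `Re((1 - e^{iφ} z) F'(z)) > 0` on the disk. -/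
theorem stmt_0 (F : ℂ → ℂ) (A : ℕ → ℂ) (φ : ℝ)
    (hA0 : A 0 = 0) (hA1 : A 1 = 1)
    (hF : ∀ z ∈ ball (0 : ℂ) 1, HasSum (fun n : ℕ => A n * z ^ n) (F z))
    (hsum : Summable (fun n : ℕ =>
      ‖((n : ℂ) + 2) * A (n + 2) - Complex.exp (φ * Complex.I) * ((n : ℂ) + 1) * A (n + 1)‖))
    (hcoef : (∑' n : ℕ,
      ‖((n : ℂ) + 2) * A (n + 2) - Complex.exp (φ * Complex.I) * ((n : ℂ) + 1) * A (n + 1)‖) ≤ 1) :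
    ∀ z ∈ ball (0 : ℂ) 1,
      0 < ((1 - Complex.exp (φ * Complex.I) * z) * deriv F z).re :=
  stmt_0_general F A φ hA1 hF hsum hcoef
end

section
/- If F(z) = z + Σ_{n≥2} A_n z^n is analytic in the unit disk and Σ_{n≥2} |n A_n - e^{iφ}(n-1) A_{n-1}| ≤ 1 for some real φ, then |(1 - e^{iφ} z) F'(z) - 1| < 1 for all z in the unit disk. -/
open Complex Metric

/-!
Since `A 1 = 1`, multiplying the differentiated series by `1 - e^{iφ} z` gives
`(1 - e^{iφ} z) F'(z) - 1 = ∑_{n ≥ 1} ((n + 1) A_{n+1} - e^{iφ} n A_n) z^n`, whose modulus is at most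
`|z| ∑ |(n + 1) A_{n+1} - e^{iφ} n A_n| ≤ |z| < 1`. Term-by-term differentiation is justified by
Abel's lemma: convergence on the disk gives absolute convergence on every smaller disk.
-/

theorem summable_norm_mul_pow_of_summable_on_ball {A : ℕ → ℂ} {R r : ℝ}
    (hA : ∀ z ∈ ball (0 : ℂ) R, Summable fun n => A n * z ^ n) (hr : 0 ≤ r) (hrR : r < R) :
    Summable fun n => ‖A n‖ * r ^ n := by
  obtain ⟨ρ, hrρ, hρR⟩ := exists_between hrR
  have hρ : 0 < ρ := hr.trans_lt hrρ
  have hρ_mem : (ρ : ℂ) ∈ ball (0 : ℂ) R := by simpa [abs_of_pos hρ] using hρR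
  obtain ⟨C, hC⟩ := (hA _ hρ_mem).tendsto_atTop_zero.norm.bddAbove_range
  have hbound (n : ℕ) : ‖A n‖ * r ^ n ≤ C * (r / ρ) ^ n := by
    have : ‖A n‖ * ρ ^ n ≤ C := by
      simpa [abs_of_pos hρ] using hC (Set.mem_range_self n)
    calc ‖A n‖ * r ^ n = ‖A n‖ * ρ ^ n * (r / ρ) ^ n := by
          rw [div_pow, mul_assoc, mul_div_cancel₀ _ (pow_ne_zero n hρ.ne')]
      _ ≤ C * (r / ρ) ^ n := by gcongr
  refine .of_nonneg_of_le (fun n => by positivity) hbound (.mul_left C ?_)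
  exact summable_geometric_of_lt_one (by positivity) ((div_lt_one hρ).2 hrρ)

theorem hasSum_deriv_of_hasSum_pow {F : ℂ → ℂ} {A : ℕ → ℂ} {R : ℝ}
    (hF : ∀ z ∈ ball (0 : ℂ) R, HasSum (fun n => A n * z ^ n) (F z)) {z : ℂ}
    (hz : z ∈ ball (0 : ℂ) R) :
    HasSum (fun n : ℕ => ((n : ℂ) + 1) * A (n + 1) * z ^ n) (deriv F z) := by
  obtain ⟨r, hzr, hrR⟩ := exists_between (mem_ball_zero_iff.1 hz)
  have hu : Summable fun n => ‖A n‖ * r ^ n :=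
    summable_norm_mul_pow_of_summable_on_ball (fun w hw => (hF w hw).summable)
      ((norm_nonneg z).trans hzr.le) hrR
  have hle (n : ℕ) (w : ℂ) (hw : w ∈ ball (0 : ℂ) r) : ‖A n * w ^ n‖ ≤ ‖A n‖ * r ^ n := by
    rw [norm_mul, norm_pow]
    gcongr
    exact (mem_ball_zero_iff.1 hw).le
  have hsum := hasSum_deriv_of_summable_norm (F := fun n w => A n * w ^ n) hu
    (fun n => ((differentiable_pow n).const_mul (A n)).differentiableOn)
    isOpen_ball hle (mem_ball_zero_iff.2 hzr)
  have hFeq : (fun w => ∑' n, A n * w ^ n) =ᶠ[nhds z] F := by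
    filter_upwards [isOpen_ball.mem_nhds hz] with w hw
    exact (hF w hw).tsum_eq
  rw [hFeq.deriv_eq] at hsum
  simpa [mul_comm, mul_left_comm, mul_assoc] using (hasSum_nat_add_iff' 1).2 hsum

theorem hasSum_one_sub_mul_mul_sub_one {A : ℕ → ℂ} {z D : ℂ} (e : ℂ) (hA1 : A 1 = 1)
    (hD : HasSum (fun n : ℕ => ((n : ℂ) + 1) * A (n + 1) * z ^ n) D) :
    HasSum (fun n : ℕ => (((n : ℂ) + 2) * A (n + 2) - e * ((n : ℂ) + 1) * A (n + 1)) * z ^ (n + 1))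
      ((1 - e * z) * D - 1) := by
  have hD' := (hasSum_nat_add_iff' 1).2 hD
  simp only [Finset.range_one, Finset.sum_singleton, Nat.cast_zero, zero_add, hA1, mul_one,
    pow_zero] at hD'
  have h := hD'.sub (hD.mul_left (e * z))
  rw [show D - 1 - e * z * D = (1 - e * z) * D - 1 by ring] at h
  refine h.congr_fun fun n => ?_
  push_cast
  ring

theorem norm_le_tsum_norm_mul_of_hasSum_mul_pow_succ {𝕜 : Type*} [NormedField 𝕜] {c : ℕ → 𝕜}
    {z s : 𝕜} (hs : HasSum (fun n => c n * z ^ (n + 1)) s) (hc : Summable fun n => ‖c n‖)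
    (hz : ‖z‖ ≤ 1) : ‖s‖ ≤ (∑' n, ‖c n‖) * ‖z‖ := by
  refine hs.norm_le_of_bounded (hc.hasSum.mul_right ‖z‖) fun n => ?_
  rw [norm_mul, norm_pow]
  gcongr
  exact pow_le_of_le_one (norm_nonneg z) hz n.succ_ne_zero

theorem stmt_1_general (F : ℂ → ℂ) (A : ℕ → ℂ) (φ : ℝ)
    (hA1 : A 1 = 1)
    (hF : ∀ z ∈ ball (0 : ℂ) 1, HasSum (fun n : ℕ => A n * z ^ n) (F z))
    (hsum : Summable (fun n : ℕ =>
      ‖((n : ℂ) + 2) * A (n + 2) - Complex.exp (φ * Complex.I) * ((n : ℂ) + 1) * A (n + 1)‖))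
    (hcoef : (∑' n : ℕ,
      ‖((n : ℂ) + 2) * A (n + 2) - Complex.exp (φ * Complex.I) * ((n : ℂ) + 1) * A (n + 1)‖) ≤ 1) :
    ∀ z ∈ ball (0 : ℂ) 1,
      ‖(1 - Complex.exp (φ * Complex.I) * z) * deriv F z - 1‖ < 1 := by
  intro z hz
  have hz1 : ‖z‖ < 1 := mem_ball_zero_iff.1 hz
  have hseries := hasSum_one_sub_mul_mul_sub_one (Complex.exp (φ * Complex.I)) hA1
    (hasSum_deriv_of_hasSum_pow hF hz)
  calc _ ≤ _ * ‖z‖ := norm_le_tsum_norm_mul_of_hasSum_mul_pow_succ hseries hsum hz1.le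
    _ ≤ 1 * ‖z‖ := by gcongr
    _ < 1 := by rwa [one_mul]

/-- If `F(z) = z + ∑_{n≥2} A n z^n` is analytic on the unit disk and
`∑_{n≥2} |n A_n - e^{iφ}(n-1) A_{n-1}| ≤ 1`, then `Re((1 - e^{iφ} z) F'(z)) > 0` on the disk. -/
theorem stmt_1 (F : ℂ → ℂ) (A : ℕ → ℂ) (φ : ℝ)
    (hA0 : A 0 = 0) (hA1 : A 1 = 1)
    (hF : ∀ z ∈ ball (0 : ℂ) 1, HasSum (fun n : ℕ => A n * z ^ n) (F z))
    (hsum : Summable (fun n : ℕ =>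
      ‖((n : ℂ) + 2) * A (n + 2) - Complex.exp (φ * Complex.I) * ((n : ℂ) + 1) * A (n + 1)‖))
    (hcoef : (∑' n : ℕ,
      ‖((n : ℂ) + 2) * A (n + 2) - Complex.exp (φ * Complex.I) * ((n : ℂ) + 1) * A (n + 1)‖) ≤ 1) :
    ∀ z ∈ ball (0 : ℂ) 1,
      ‖(1 - Complex.exp (φ * Complex.I) * z) * deriv F z - 1‖ < 1 :=
  stmt_1_general F A φ hA1 hF hsum hcoef
end

section
/- Suppose a_n, b_n are complex sequences (with a_1 = 1, b_0 = 0, |b_1| < 1) satisfying Σ_{n≥2} |n a_n - e^{iφ}(n-1) a_{n-1}| + Σ_{n≥1} |n b_n - e^{iφ}(n-1) b_{n-1}| ≤ 1 for some real φ. Then for every ε with |ε| = 1, the coefficients A_n = (a_n + ε b_n)/(1 + ε b_1) satisfy Σ_{n≥2} |n A_n - e^{iφ}(n-1) A_{n-1}| ≤ 1. -/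
open Complex

/-! The defect `D x n = (n + 1) x_{n+1} - e^{iφ} n x_n` is linear in `x`, so
`D A (n + 1) = (D a (n + 1) + ε D b (n + 1)) / (1 + ε b_1)`. Since `D b 0 = b_1`, the triangle
inequality bounds the new sum by `(1 - |b_1|) / |1 + ε b_1|`, and `|1 + ε b_1| ≥ 1 - |b_1|`. -/

variable {K : Type*}

def coeffDefect [Ring K] (e : K) (x : ℕ → K) (n : ℕ) : K :=
  ((n : K) + 1) * x (n + 1) - e * n * x n

lemma coeffDefect_zero [Ring K] (e : K) (x : ℕ → K) : coeffDefect e x 0 = x 1 := by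
  simp [coeffDefect]

lemma coeffDefect_succ [Ring K] (e : K) (x : ℕ → K) (n : ℕ) :
    coeffDefect e x (n + 1) = ((n : K) + 2) * x (n + 2) - e * ((n : K) + 1) * x (n + 1) := by
  simp only [coeffDefect, Nat.cast_succ, add_assoc, one_add_one_eq_two]

lemma coeffDefect_add_mul_div [Field K] (e ε c : K) (x y : ℕ → K) (n : ℕ) :
    coeffDefect e (fun k => (x k + ε * y k) / c) n
      = (coeffDefect e x n + ε * coeffDefect e y n) / c := by
  simp only [coeffDefect]
  ring

lemma one_sub_norm_le_norm_one_add_mul [NormedField K] {ε : K} (hε : ‖ε‖ = 1) (z : K) :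
    1 - ‖z‖ ≤ ‖1 + ε * z‖ := by
  have h := norm_sub_le_norm_add (1 : K) (ε * z)
  rwa [norm_one, norm_mul, hε, one_mul] at h

lemma summable_norm_add_mul_div_and_tsum_le [NormedField K] {u v : ℕ → K} {ε c : K}
    (hε : ‖ε‖ ≤ 1) (hu : Summable fun n => ‖u n‖) (hv : Summable fun n => ‖v n‖)
    (hsum : ∑' n, ‖u n‖ + ∑' n, ‖v n‖ ≤ 1) (hv0 : ‖v 0‖ < 1) (hc : 1 - ‖v 0‖ ≤ ‖c‖) :
    Summable (fun n => ‖(u n + ε * v (n + 1)) / c‖)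
      ∧ ∑' n, ‖(u n + ε * v (n + 1)) / c‖ ≤ 1 := by
  have hc_pos : 0 < ‖c‖ := by linarith
  have hv_succ : Summable fun n => ‖v (n + 1)‖ := (summable_nat_add_iff 1).mpr hv
  have hbound : ∀ n, ‖(u n + ε * v (n + 1)) / c‖ ≤ (‖u n‖ + ‖v (n + 1)‖) / ‖c‖ := by
    intro n
    rw [norm_div]
    gcongr
    calc ‖u n + ε * v (n + 1)‖ ≤ ‖u n‖ + ‖ε‖ * ‖v (n + 1)‖ := by
          simpa only [norm_mul] using norm_add_le (u n) (ε * v (n + 1))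
      _ ≤ ‖u n‖ + ‖v (n + 1)‖ := by gcongr; exact mul_le_of_le_one_left (norm_nonneg _) hε
  have hmajorant : Summable fun n => (‖u n‖ + ‖v (n + 1)‖) / ‖c‖ :=
    (hu.add hv_succ).div_const _
  have hsumm := Summable.of_nonneg_of_le (fun n => norm_nonneg _) hbound hmajorant
  refine ⟨hsumm, ?_⟩
  have hshift : ∑' n, ‖v n‖ = ‖v 0‖ + ∑' n, ‖v (n + 1)‖ := hv.tsum_eq_zero_add
  calc ∑' n, ‖(u n + ε * v (n + 1)) / c‖
      ≤ ∑' n, (‖u n‖ + ‖v (n + 1)‖) / ‖c‖ := hsumm.tsum_le_tsum hbound hmajorant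
    _ = (∑' n, ‖u n‖ + ∑' n, ‖v (n + 1)‖) / ‖c‖ := by rw [tsum_div_const, hu.tsum_add hv_succ]
    _ ≤ 1 := by rw [div_le_one hc_pos]; linarith

theorem stmt_2_general (a b : ℕ → ℂ) (φ : ℝ) (ε : ℂ)
    (hb1 : ‖b 1‖ < 1) (hε : ‖ε‖ = 1)
    (hsa : Summable (fun n : ℕ =>
      ‖((n : ℂ) + 2) * a (n + 2) - Complex.exp (φ * Complex.I) * ((n : ℂ) + 1) * a (n + 1)‖))
    (hsb : Summable (fun n : ℕ =>
      ‖((n : ℂ) + 1) * b (n + 1) - Complex.exp (φ * Complex.I) * (n : ℂ) * b n‖))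
    (hcoef : (∑' n : ℕ,
        ‖((n : ℂ) + 2) * a (n + 2) - Complex.exp (φ * Complex.I) * ((n : ℂ) + 1) * a (n + 1)‖)
      + (∑' n : ℕ,
        ‖((n : ℂ) + 1) * b (n + 1) - Complex.exp (φ * Complex.I) * (n : ℂ) * b n‖) ≤ 1) :
    Summable (fun n : ℕ =>
      ‖((n : ℂ) + 2) * ((a (n + 2) + ε * b (n + 2)) / (1 + ε * b 1))
        - Complex.exp (φ * Complex.I) * ((n : ℂ) + 1) * ((a (n + 1) + ε * b (n + 1)) / (1 + ε * b 1))‖)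
    ∧ (∑' n : ℕ,
      ‖((n : ℂ) + 2) * ((a (n + 2) + ε * b (n + 2)) / (1 + ε * b 1))
        - Complex.exp (φ * Complex.I) * ((n : ℂ) + 1) * ((a (n + 1) + ε * b (n + 1)) / (1 + ε * b 1))‖) ≤ 1 := by
  set e := Complex.exp (φ * Complex.I)
  simp only [← coeffDefect_succ] at hsa hcoef ⊢
  simp only [← coeffDefect_succ e (fun k => (a k + ε * b k) / (1 + ε * b 1)),
    coeffDefect_add_mul_div]
  refine summable_norm_add_mul_div_and_tsum_le hε.le hsa hsb hcoef ?_ ?_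
  · rwa [coeffDefect_zero]
  · rw [coeffDefect_zero]
    exact one_sub_norm_le_norm_one_add_mul hε (b 1)

/-- Coefficient transfer: if the harmonic coefficient condition holds for `a, b`, then for each
unimodular `ε` the coefficients `A n = (a n + ε b n)/(1 + ε b 1)` satisfy the analytic condition. -/
theorem stmt_2 (a b : ℕ → ℂ) (φ : ℝ) (ε : ℂ)
    (ha1 : a 1 = 1) (hb0 : b 0 = 0) (hb1 : ‖b 1‖ < 1) (hε : ‖ε‖ = 1)
    (hsa : Summable (fun n : ℕ =>
      ‖((n : ℂ) + 2) * a (n + 2) - Complex.exp (φ * Complex.I) * ((n : ℂ) + 1) * a (n + 1)‖))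
    (hsb : Summable (fun n : ℕ =>
      ‖((n : ℂ) + 1) * b (n + 1) - Complex.exp (φ * Complex.I) * (n : ℂ) * b n‖))
    (hcoef : (∑' n : ℕ,
        ‖((n : ℂ) + 2) * a (n + 2) - Complex.exp (φ * Complex.I) * ((n : ℂ) + 1) * a (n + 1)‖)
      + (∑' n : ℕ,
        ‖((n : ℂ) + 1) * b (n + 1) - Complex.exp (φ * Complex.I) * (n : ℂ) * b n‖) ≤ 1) :
    Summable (fun n : ℕ =>
      ‖((n : ℂ) + 2) * ((a (n + 2) + ε * b (n + 2)) / (1 + ε * b 1))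
        - Complex.exp (φ * Complex.I) * ((n : ℂ) + 1) * ((a (n + 1) + ε * b (n + 1)) / (1 + ε * b 1))‖)
    ∧ (∑' n : ℕ,
      ‖((n : ℂ) + 2) * ((a (n + 2) + ε * b (n + 2)) / (1 + ε * b 1))
        - Complex.exp (φ * Complex.I) * ((n : ℂ) + 1) * ((a (n + 1) + ε * b (n + 1)) / (1 + ε * b 1))‖) ≤ 1 :=
  stmt_2_general a b φ ε hb1 hε hsa hsb hcoef
end

section
/- Let {c_n}_{n≥0} be a convex null sequence with c_0 = 2 and define F(z) = z + Σ_{n≥2} (c_{n-1}/n) z^n. Then Re(F'(z)) > 0 for all z in the unit disk. -/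
open Complex Metric Filter

/-!
With `d n = c n - 2 c (n + 1) + c (n + 2) ≥ 0`, two summations by parts give
`F' z + 1 = ∑ c n z ^ n = ∑ d n σ_n(z)`, where `σ_n(z) = ∑_{k ≤ n} ∑_{j ≤ k} z ^ j`, and
`∑ (n + 1) d n = c 0 = 2`. On the unit circle `2 Re σ_n = n + 1 + |∑_{j ≤ n} w ^ j|²` (Fejér's
kernel is nonnegative), so the minimum principle for the harmonic function `Re σ_n` gives
`Re σ_n > (n + 1) / 2` in the open disk. Hence `Re (F' z + 1) > ∑ d n (n + 1) / 2 = 1`.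
-/

open Finset Topology ComplexConjugate

theorem Antitone.hasSum_sub_succ {f : ℕ → ℝ} {l : ℝ} (hf : Antitone f)
    (hl : Tendsto f atTop (𝓝 l)) : HasSum (fun n => f n - f (n + 1)) (f 0 - l) := by
  rw [hasSum_iff_tendsto_nat_of_nonneg fun n => sub_nonneg.2 (hf n.le_succ)]
  simp only [sum_range_sub']
  exact tendsto_const_nhds.sub hl

theorem Antitone.tendsto_natCast_mul_of_summable {f : ℕ → ℝ} (hf : Antitone f)
    (hs : Summable f) : Tendsto (fun n : ℕ => n * f n) atTop (𝓝 0) := by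
  have hnonneg : ∀ n, 0 ≤ f n := fun n => hf.le_of_tendsto hs.tendsto_atTop_zero n
  -- `n f(n) ≤ 2 ∑_{n/2 ≤ k < n} f k`, a difference of two partial sums with the same limit
  have hupper : ∀ n : ℕ, n * f n ≤ 2 * (∑ k ∈ range n, f k - ∑ k ∈ range (n / 2), f k) := by
    intro n
    rw [← sum_Ico_eq_sub _ (Nat.div_le_self n 2)]
    calc (n : ℝ) * f n ≤ 2 * ((n - n / 2 : ℕ) * f n) := by
          rw [← mul_assoc]
          gcongr
          · exact hnonneg n
          · exact_mod_cast (by omega : n ≤ 2 * (n - n / 2))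
      _ ≤ 2 * ∑ k ∈ Ico (n / 2) n, f k := by
          gcongr
          simpa using card_nsmul_le_sum (Ico (n / 2) n) f (f n)
            fun k hk => hf (mem_Ico.1 hk).2.le
  have hsum := hs.hasSum.tendsto_sum_nat
  have hlim : Tendsto (fun n : ℕ => 2 * (∑ k ∈ range n, f k - ∑ k ∈ range (n / 2), f k))
      atTop (𝓝 0) := by
    simpa using (hsum.sub (hsum.comp (Nat.tendsto_div_const_atTop two_ne_zero))).const_mul 2
  exact squeeze_zero (fun n => mul_nonneg n.cast_nonneg (hnonneg n)) hupper hlim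

theorem Antitone.hasSum_succ_mul_sub_succ {b : ℕ → ℝ} {s : ℝ} (hb : Antitone b)
    (hs : HasSum b s) : HasSum (fun n : ℕ => (n + 1) * (b n - b (n + 1))) s := by
  have hpartial : ∀ N : ℕ, ∑ k ∈ range N, (k + 1) * (b k - b (k + 1))
      = ∑ k ∈ range N, b k - N * b N := by
    intro N
    induction N with
    | zero => simp
    | succ N ih =>
      rw [sum_range_succ, sum_range_succ, ih]
      push_cast
      ring
  rw [hasSum_iff_tendsto_nat_of_nonneg fun n => mul_nonneg (by positivity)
    (sub_nonneg.2 (hb n.le_succ))]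
  simp only [hpartial]
  simpa using hs.tendsto_sum_nat.sub (hb.tendsto_natCast_mul_of_summable hs.summable)

theorem HasSum.sub_succ_mul_pow_succ {R : Type*} [CommRing R] [TopologicalSpace R]
    [IsTopologicalRing R] {a : ℕ → R} {z A : R} (h : HasSum (fun n => a n * z ^ n) A) :
    HasSum (fun n => (a n - a (n + 1)) * z ^ (n + 1)) (a 0 - (1 - z) * A) := by
  have hshift : HasSum (fun n => a (n + 1) * z ^ (n + 1)) (A - a 0) := by
    simpa using (hasSum_nat_add_iff' 1).2 h
  have hsplit : (fun n => (a n - a (n + 1)) * z ^ (n + 1))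
      = fun n => z * (a n * z ^ n) - a (n + 1) * z ^ (n + 1) := by
    funext n
    ring
  rw [hsplit, show a 0 - (1 - z) * A = z * A - (A - a 0) by ring]
  exact (h.mul_left z).sub hshift

theorem summable_mul_pow_of_norm_le {a : ℕ → ℂ} {M : ℝ} (ha : ∀ n, ‖a n‖ ≤ M) {z : ℂ}
    (hz : ‖z‖ < 1) : Summable fun n => a n * z ^ n := by
  refine .of_norm_bounded ((summable_geometric_of_lt_one (norm_nonneg z) hz).mul_left M)
    fun n => ?_
  rw [norm_mul, norm_pow]
  gcongr
  exact ha n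

theorem hasDerivAt_tsum_div_succ_mul_pow {a : ℕ → ℂ} {M : ℝ} (ha : ∀ n, ‖a n‖ ≤ M) {z : ℂ}
    (hz : ‖z‖ < 1) :
    HasDerivAt (fun w => ∑' n, a n / (n + 1) * w ^ (n + 1)) (∑' n, a n * z ^ n) z := by
  obtain ⟨r, hzr, hr⟩ := exists_between hz
  have hderiv : ∀ n, ∀ w ∈ ball (0 : ℂ) r,
      HasDerivAt (fun w => a n / (n + 1) * w ^ (n + 1)) (a n * w ^ n) w := by
    intro n w _
    refine ((hasDerivAt_pow (n + 1) w).const_mul (a n / (n + 1))).congr_deriv ?_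
    rw [Nat.add_sub_cancel, Nat.cast_add_one]
    field_simp
  have hbound : ∀ n, ∀ w ∈ ball (0 : ℂ) r, ‖a n * w ^ n‖ ≤ M * r ^ n := by
    intro n w hw
    rw [norm_mul, norm_pow]
    gcongr
    exacts [(norm_nonneg _).trans (ha 0), ha n, (mem_ball_zero_iff.1 hw).le]
  exact hasDerivAt_tsum_of_isPreconnected
    ((summable_geometric_of_lt_one ((norm_nonneg z).trans hzr.le) hr).mul_left M) isOpen_ball
    (convex_ball 0 r).isPreconnected hderiv hbound (mem_ball_self ((norm_nonneg z).trans_lt hzr))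
    (by simp) (mem_ball_zero_iff.2 hzr)

theorem le_re_of_forall_mem_frontier_le_re {E : Type*} [NormedAddCommGroup E]
    [NormedSpace ℂ E] [Nontrivial E] {f : E → ℂ} {U : Set E} (hU : Bornology.IsBounded U)
    (hf : DiffContOnCl ℂ f U) {a : ℝ} (ha : ∀ z ∈ frontier U, a ≤ (f z).re) {z : E} (hz : z ∈ closure U) :
    a ≤ (f z).re := by
  -- maximum modulus principle for `exp (-f)`
  have h := norm_le_of_forall_mem_frontier_norm_le hU
    (differentiable_exp.comp_diffContOnCl hf.neg) (C := Real.exp (-a)) (fun w hw => by simpa [norm_exp] using ha w hw) hz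
  simpa [norm_exp] using h

theorem lt_re_of_forall_le_re_of_isPreconnected {E : Type*} [NormedAddCommGroup E]
    [NormedSpace ℂ E] {f : E → ℂ} {U : Set E} (hc : IsPreconnected U) (ho : IsOpen U)
    (hf : DifferentiableOn ℂ f U) {a : ℝ} (ha : ∀ z ∈ U, a ≤ (f z).re) {w : E} (hw : w ∈ U)
    (hlt : a < (f w).re) {z : E} (hz : z ∈ U) : a < (f z).re := by
  refine (ha z hz).lt_of_ne fun heq => hlt.ne' ?_
  have hmax : IsMaxOn (norm ∘ fun x => exp (-f x)) U z := fun x hx => by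
    simpa [norm_exp, ← heq] using ha x hx
  have := norm_eqOn_of_isPreconnected_of_isMaxOn hc ho hf.neg.cexp hz hmax hw
  simpa [norm_exp, ← heq] using this

/-- `n + 1` times the `n`-th Cesàro mean of the partial sums of `∑ z ^ j`. -/
def fejerSum (n : ℕ) (z : ℂ) : ℂ := ∑ k ∈ range (n + 1), ∑ j ∈ range (k + 1), z ^ j

theorem one_sub_sq_mul_fejerSum (n : ℕ) (z : ℂ) :
    (1 - z) ^ 2 * fejerSum n z = (n + 1) * (1 - z) - z * (1 - z ^ (n + 1)) := by
  have hgeom : ∀ k, (1 - z) * ∑ j ∈ range (k + 1), z ^ j = 1 - z * z ^ k := fun k => by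
    rw [mul_neg_geom_sum, pow_succ']
  rw [fejerSum, sq, mul_assoc, mul_sum]
  simp only [hgeom, sum_sub_distrib, ← mul_sum, mul_sub, mul_left_comm (1 - z) z]
  simp
  ring

theorem succ_add_norm_sq_eq_two_mul_re_fejerSum (n : ℕ) {w : ℂ} (hw : ‖w‖ = 1) :
    (n + 1 : ℝ) + ‖∑ j ∈ range (n + 1), w ^ j‖ ^ 2 = 2 * (fejerSum n w).re := by
  have hconj : ∀ m, w ^ m * conj w ^ m = 1 := fun m => by
    rw [← mul_pow, mul_conj, normSq_eq_norm_sq, hw]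
    simp
  -- on the unit circle, `conj (w ^ (n + 1)) * w ^ j = conj w ^ (n + 1 - j)`
  have hcross : ∀ n, ((∑ j ∈ range (n + 1), w ^ j) * conj (w ^ (n + 1))).re
      = (∑ j ∈ range (n + 2), w ^ j).re - 1 := by
    intro n
    rw [sum_range_succ' (fun j => w ^ j) (n + 1), pow_zero, add_re, one_re, add_sub_cancel_right,
      re_sum, sum_mul, re_sum, ← sum_range_reflect (fun j => (w ^ (j + 1)).re)]
    refine sum_congr rfl fun j hj => ?_
    obtain ⟨k, rfl⟩ : ∃ k, n = j + k := ⟨n - j, by have := mem_range.1 hj; omega⟩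
    rw [show j + k + 1 - 1 - j = k by omega, map_pow, add_assoc, pow_add, ← mul_assoc, hconj,
      one_mul, ← map_pow, conj_re]
  induction n with
  | zero => simp [fejerSum]; norm_num
  | succ n ih =>
    have hS : ∑ j ∈ range (n + 2), w ^ j = ∑ j ∈ range (n + 1), w ^ j + w ^ (n + 1) :=
      sum_range_succ _ _
    have hσ : fejerSum (n + 1) w = fejerSum n w + ∑ j ∈ range (n + 2), w ^ j :=
      sum_range_succ _ _
    have hnorm : ‖w ^ (n + 1)‖ = 1 := by rw [norm_pow, hw, one_pow]
    have hexpand := normSq_add (∑ j ∈ range (n + 1), w ^ j) (w ^ (n + 1))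
    rw [← hS, hcross, normSq_eq_norm_sq, normSq_eq_norm_sq, normSq_eq_norm_sq, hnorm] at hexpand
    rw [hσ, add_re, hexpand]
    push_cast
    linarith

theorem differentiable_fejerSum (n : ℕ) : Differentiable ℂ (fejerSum n) := by
  unfold fejerSum
  fun_prop

theorem half_lt_re_fejerSum (n : ℕ) {z : ℂ} (hz : ‖z‖ < 1) :
    ((n : ℝ) + 1) / 2 < (fejerSum n z).re := by
  have hle : ∀ w ∈ ball (0 : ℂ) 1, ((n : ℝ) + 1) / 2 ≤ (fejerSum n w).re := by
    intro w hw
    refine le_re_of_forall_mem_frontier_le_re isBounded_ball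
      (differentiable_fejerSum n).diffContOnCl (fun v hv => ?_) (subset_closure hw)
    rw [frontier_ball 0 one_ne_zero, mem_sphere_zero_iff_norm] at hv
    linarith [succ_add_norm_sq_eq_two_mul_re_fejerSum n hv,
      sq_nonneg ‖∑ j ∈ range (n + 1), v ^ j‖]
  refine lt_re_of_forall_le_re_of_isPreconnected (convex_ball 0 1).isPreconnected isOpen_ball
    (differentiable_fejerSum n).differentiableOn hle (mem_ball_self one_pos) ?_
    (mem_ball_zero_iff.2 hz)
  simp [fejerSum]
  linarith

def IsConvexNull (c : ℕ → ℝ) : Prop :=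
  Tendsto c atTop (𝓝 0) ∧ Antitone fun n => c n - c (n + 1)

namespace IsConvexNull

variable {c : ℕ → ℝ}

theorem tendsto_sub_succ (hc : IsConvexNull c) :
    Tendsto (fun n => c n - c (n + 1)) atTop (𝓝 0) := by
  simpa using hc.1.sub (hc.1.comp (tendsto_add_atTop_nat 1))

theorem sub_succ_nonneg (hc : IsConvexNull c) (n : ℕ) : 0 ≤ c n - c (n + 1) :=
  hc.2.le_of_tendsto hc.tendsto_sub_succ n

protected theorem antitone (hc : IsConvexNull c) : Antitone c :=
  antitone_nat_of_succ_le fun n => sub_nonneg.1 (hc.sub_succ_nonneg n)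

theorem nonneg (hc : IsConvexNull c) (n : ℕ) : 0 ≤ c n :=
  hc.antitone.le_of_tendsto hc.1 n

theorem norm_le (hc : IsConvexNull c) (n : ℕ) : ‖(c n : ℂ)‖ ≤ c 0 := by
  rw [norm_real, Real.norm_of_nonneg (hc.nonneg n)]
  exact hc.antitone n.zero_le

theorem hasSum_sub_succ (hc : IsConvexNull c) : HasSum (fun n => c n - c (n + 1)) (c 0) := by
  simpa using hc.antitone.hasSum_sub_succ hc.1

theorem hasSum_sub_succ_sub_sub_succ (hc : IsConvexNull c) :
    HasSum (fun n => c n - c (n + 1) - (c (n + 1) - c (n + 2))) (c 0 - c 1) := by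
  simpa using hc.2.hasSum_sub_succ hc.tendsto_sub_succ

theorem hasSum_succ_mul_sub_succ_sub_sub_succ (hc : IsConvexNull c) :
    HasSum (fun n : ℕ => (n + 1) * (c n - c (n + 1) - (c (n + 1) - c (n + 2)))) (c 0) :=
  hc.2.hasSum_succ_mul_sub_succ hc.hasSum_sub_succ

theorem hasSum_mul_fejerSum (hc : IsConvexNull c) {z : ℂ} (hz : ‖z‖ < 1) :
    HasSum (fun n => ((c n - c (n + 1) - (c (n + 1) - c (n + 2)) : ℝ) : ℂ) * fejerSum n z)
      (∑' n, (c n : ℂ) * z ^ n) := by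
  have hA := (summable_mul_pow_of_norm_le hc.norm_le hz).hasSum
  have hB := (summable_mul_pow_of_norm_le (a := fun n => ((c n - c (n + 1) : ℝ) : ℂ))
    (M := c 0 - c 1) (fun n => by
      rw [norm_real, Real.norm_of_nonneg (hc.sub_succ_nonneg n)]
      exact hc.2 n.zero_le) hz).hasSum
  set A := ∑' n, (c n : ℂ) * z ^ n
  set B := ∑' n, ((c n - c (n + 1) : ℝ) : ℂ) * z ^ n
  have hzB : z * B = c 0 - (1 - z) * A :=
    (hB.mul_left z).unique (hA.sub_succ_mul_pow_succ.congr_fun fun n => by push_cast; ring)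
  have h1 := (hasSum_ofReal.2 hc.hasSum_succ_mul_sub_succ_sub_sub_succ).mul_right (1 - z)
  have h2 := (hasSum_ofReal.2 hc.hasSum_sub_succ_sub_sub_succ).mul_right z
  have h3 := hB.sub_succ_mul_pow_succ.mul_left z
  have hz1 : (1 - z) ^ 2 ≠ 0 := pow_ne_zero 2 (sub_ne_zero.2 (by rintro rfl; simp at hz))
  rw [← hasSum_mul_left_iff hz1]
  have hsum : (1 - z) ^ 2 * A = c 0 * (1 - z) - (c 0 - c 1 : ℝ) * z
      + z * ((c 0 - c 1 : ℝ) - (1 - z) * B) := by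
    push_cast
    linear_combination (1 - z) * hzB
  rw [hsum]
  refine ((h1.sub h2).add h3).congr_fun fun n => ?_
  rw [mul_left_comm, one_sub_sq_mul_fejerSum]
  push_cast
  ring

theorem half_lt_re_tsum (hc : IsConvexNull c) (h0 : 0 < c 0) {z : ℂ} (hz : ‖z‖ < 1) :
    c 0 / 2 < (∑' n, (c n : ℂ) * z ^ n).re := by
  set d := fun n => c n - c (n + 1) - (c (n + 1) - c (n + 2))
  have hd : ∀ n, 0 ≤ d n := fun n => sub_nonneg.2 (hc.2 n.le_succ)
  have hre : HasSum (fun n => d n * (fejerSum n z).re) (∑' n, (c n : ℂ) * z ^ n).re := by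
    simpa only [re_ofReal_mul] using hasSum_re (hc.hasSum_mul_fejerSum hz)
  have hhalf : HasSum (fun n : ℕ => d n * ((n + 1) / 2)) (c 0 / 2) :=
    (hc.hasSum_succ_mul_sub_succ_sub_sub_succ.div_const 2).congr_fun fun n => by ring
  obtain ⟨m, hm⟩ : ∃ m, 0 < d m := by
    by_contra! h
    have hzero : ∀ n : ℕ, (n + 1) * d n = 0 := fun n => by
      rw [le_antisymm (h n) (hd n), mul_zero]
    exact h0.ne' (hc.hasSum_succ_mul_sub_succ_sub_sub_succ.unique
      (hasSum_zero.congr_fun hzero))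
  exact hasSum_lt (fun n => mul_le_mul_of_nonneg_left (half_lt_re_fejerSum n hz).le (hd n))
    (mul_lt_mul_of_pos_left (half_lt_re_fejerSum m hz) hm) hhalf hre

end IsConvexNull

theorem stmt_4_general (c : ℕ → ℝ) (F : ℂ → ℂ)
    (hnull : Tendsto c atTop (nhds 0))
    (hconv : ∀ n, c (n + 1) - c (n + 2) ≤ c n - c (n + 1) ∧ 0 ≤ c (n + 1) - c (n + 2))
    (hc0 : c 0 = 2)
    (hF : ∀ z ∈ ball (0 : ℂ) 1,
      HasSum (fun n : ℕ => ((c (n + 1) : ℂ) / ((n : ℂ) + 2)) * z ^ (n + 2)) (F z - z)) :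
    ∀ z ∈ ball (0 : ℂ) 1, 0 < (deriv F z).re := by
  intro z hz
  have hc : IsConvexNull c := ⟨hnull, antitone_nat_of_succ_le fun n => (hconv n).1⟩
  have hz1 : ‖z‖ < 1 := mem_ball_zero_iff.1 hz
  -- reindexing `hF`, the new `n = 0` term is `c 0 * w = 2 * w`
  have hFeq : F =ᶠ[𝓝 z] fun w => (∑' n, (c n : ℂ) / (n + 1) * w ^ (n + 1)) - w := by
    filter_upwards [isOpen_ball.mem_nhds hz] with w hw
    have h : HasSum (fun n => (c n : ℂ) / (n + 1) * w ^ (n + 1)) (F w + w) := by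
      rw [← hasSum_nat_add_iff' 1, show F w + w - ∑ i ∈ range 1, (c i : ℂ) / (i + 1) * w ^ (i + 1)
        = F w - w by simp [hc0]; ring]
      exact (hF w hw).congr_fun fun n => by push_cast; ring
    rw [h.tsum_eq, add_sub_cancel_right]
  have hderiv := (hasDerivAt_tsum_div_succ_mul_pow hc.norm_le hz1).fun_sub (hasDerivAt_id' z)
  rw [hFeq.deriv_eq, hderiv.deriv, sub_re, one_re, sub_pos]
  simpa [hc0] using hc.half_lt_re_tsum (hc0 ▸ two_pos) hz1

/-- If `{c_n}` is a convex null sequence with `c₀ = 2` and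
`F(z) = z + ∑_{n≥2} (c_{n-1}/n) z^n`, then `Re F'(z) > 0` on the unit disk. -/
theorem stmt_4 (c : ℕ → ℝ) (F : ℂ → ℂ)
    (hnn : ∀ n, 0 ≤ c n)
    (hnull : Tendsto c atTop (nhds 0))
    (hconv : ∀ n, c (n + 1) - c (n + 2) ≤ c n - c (n + 1) ∧ 0 ≤ c (n + 1) - c (n + 2))
    (hc0 : c 0 = 2)
    (hF : ∀ z ∈ ball (0 : ℂ) 1,
      HasSum (fun n : ℕ => ((c (n + 1) : ℂ) / ((n : ℂ) + 2)) * z ^ (n + 2)) (F z - z)) :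
    ∀ z ∈ ball (0 : ℂ) 1, 0 < (deriv F z).re :=
  stmt_4_general c F hnull hconv hc0 hF
end

section
/- For every z in the unit disk, the function f(z) = Re(z/(1-z)^2) + i·Im(z/(1-z)), written as f = u + iv, satisfies u > -v^2 - 1/4. That is, if u = Re(z/(1-z)^2) and v = Im(z/(1-z)) for |z| < 1, then u + v^2 + 1/4 > 0. -/
/-!
Put `w = z / (1 - z)`. Since `1 / (1 - z) = 1 + w`, the Koebe function is `w + w²`, so
`u + v² + 1/4 = Re w + (Re w)² - (Im w)² + (Im w)² + 1/4 = (Re w + 1/2)²`.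
The map `z ↦ z / (1 - z)` sends the unit disk onto the half-plane `Re w > -1/2`, so the square
is positive.
-/

open Complex

theorem re_div_one_sub_add_half {z : ℂ} (hz : z ≠ 1) :
    (z / (1 - z)).re + 1 / 2 = (1 - normSq z) / (2 * normSq (1 - z)) := by
  have h : normSq (1 - z) ≠ 0 := normSq_eq_zero.not.mpr (sub_ne_zero.mpr hz.symm)
  rw [div_re]
  field_simp
  simp only [normSq_apply, sub_re, sub_im, one_re, one_im]
  ring

theorem neg_half_lt_re_div_one_sub {z : ℂ} (hz : ‖z‖ < 1) : -(1 / 2 : ℝ) < (z / (1 - z)).re := by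
  have hz1 : z ≠ 1 := by rintro rfl; simp at hz
  have hpos : 0 < (1 - normSq z) / (2 * normSq (1 - z)) := by
    have : 0 < normSq (1 - z) := normSq_pos.mpr (sub_ne_zero.mpr hz1.symm)
    have : 0 < 1 - normSq z := by rw [normSq_eq_norm_sq]; nlinarith [norm_nonneg z]
    positivity
  linarith [re_div_one_sub_add_half hz1]

theorem div_one_sub_sq_eq {z : ℂ} (hz : z ≠ 1) :
    z / (1 - z) ^ 2 = z / (1 - z) + (z / (1 - z)) ^ 2 := by
  have : 1 - z ≠ 0 := sub_ne_zero.mpr hz.symm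
  field_simp
  ring

theorem re_add_sq_add_im_sq (w : ℂ) : (w + w ^ 2).re + w.im ^ 2 + 1 / 4 = (w.re + 1 / 2) ^ 2 := by
  simp only [add_re, sq, mul_re]
  ring

/-- For `|z| < 1`, with `u = Re(z/(1-z)²)` and `v = Im(z/(1-z))`, one has `u + v² + 1/4 > 0`. -/
theorem stmt_8 (z : ℂ) (hz : ‖z‖ < 1) :
    0 < (z / (1 - z) ^ 2).re + ((z / (1 - z)).im) ^ 2 + 1 / 4 := by
  have hz1 : z ≠ 1 := by rintro rfl; simp at hz
  rw [div_one_sub_sq_eq hz1, re_add_sq_add_im_sq]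
  exact pow_pos (by linarith [neg_half_lt_re_div_one_sub hz]) 2
end

section
/- The analytic part h(z) = (1-(1-z)^2)/(2(1-z)^2) of the Bshouty–Lyzzaik example satisfies Re(1 + z h''(z)/h'(z)) > -1/2 for all z in the unit disk. -/
/-!
Away from `z = 1` we have `h z = (1 - z)⁻² / 2 - 1 / 2`, so `h' = (1 - z)⁻³` and
`h'' = 3 (1 - z)⁻⁴`. Hence `1 + z h''/h' = (1 + 2z)/(1 - z) = 3 / (1 - z) - 2`, and the claim
follows from `Re (1 / (1 - z)) > 1 / 2` on the unit disk: `z ↦ 1 / (1 - z)` maps the disk onto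
the half-plane `Re w > 1 / 2`.
-/

open Complex Metric Filter Topology

theorem hasDerivAt_inv_one_sub_pow {𝕜 : Type*} [NontriviallyNormedField 𝕜] (n : ℕ) {w : 𝕜}
    (hw : w ≠ 1) :
    HasDerivAt (fun z => ((1 - z) ^ n)⁻¹) (n * ((1 - w) ^ (n + 1))⁻¹) w := by
  have hne : 1 - w ≠ 0 := sub_ne_zero.mpr hw.symm
  refine (((hasDerivAt_id' w).const_sub 1).fun_pow n).fun_inv (pow_ne_zero n hne)
    |>.congr_deriv ?_
  rcases n with _ | n
  · simp
  · rw [Nat.add_sub_cancel]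
    field_simp
    ring

theorem Complex.one_half_lt_re_inv_one_sub {z : ℂ} (hz : ‖z‖ < 1) : 1 / 2 < (1 - z)⁻¹.re := by
  have hz1 : z ≠ 1 := by rintro rfl; simp at hz
  have hnormSq : 0 < normSq (1 - z) := normSq_pos.mpr (sub_ne_zero.mpr hz1.symm)
  have hdisk : z.re ^ 2 + z.im ^ 2 < 1 := by
    rw [← sq_lt_one_iff₀ (norm_nonneg z), Complex.sq_norm, normSq_apply] at hz
    nlinarith
  rw [inv_re, lt_div_iff₀ hnormSq, normSq_apply]
  simp only [sub_re, one_re, sub_im, one_im]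
  nlinarith

noncomputable def bshoutyLyzzaikH (z : ℂ) : ℂ := (1 - (1 - z) ^ 2) / (2 * (1 - z) ^ 2)

theorem deriv_bshoutyLyzzaikH {w : ℂ} (hw : w ≠ 1) :
    deriv bshoutyLyzzaikH w = ((1 - w) ^ 3)⁻¹ := by
  have heq : bshoutyLyzzaikH =ᶠ[𝓝 w] fun z => ((1 - z) ^ 2)⁻¹ / 2 - 1 / 2 := by
    filter_upwards [isOpen_ne.mem_nhds hw] with z hz
    have : (1 - z) ^ 2 ≠ 0 := pow_ne_zero 2 (sub_ne_zero.mpr hz.symm)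
    rw [bshoutyLyzzaikH]
    field_simp
  rw [heq.deriv_eq, deriv_sub_const, deriv_div_const, (hasDerivAt_inv_one_sub_pow 2 hw).deriv]
  push_cast
  ring

theorem deriv_deriv_bshoutyLyzzaikH {w : ℂ} (hw : w ≠ 1) :
    deriv (deriv bshoutyLyzzaikH) w = 3 * ((1 - w) ^ 4)⁻¹ := by
  have heq : deriv bshoutyLyzzaikH =ᶠ[𝓝 w] fun z => ((1 - z) ^ 3)⁻¹ := by
    filter_upwards [isOpen_ne.mem_nhds hw] with z hz using deriv_bshoutyLyzzaikH hz
  rw [heq.deriv_eq, (hasDerivAt_inv_one_sub_pow 3 hw).deriv]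
  push_cast
  ring

/-- The analytic part `h(z) = (1-(1-z)²)/(2(1-z)²)` satisfies
`Re(1 + z h''(z)/h'(z)) > -1/2` on the unit disk. -/
theorem stmt_12 (h : ℂ → ℂ)
    (hh : ∀ z, h z = (1 - (1 - z) ^ 2) / (2 * (1 - z) ^ 2)) :
    ∀ z ∈ ball (0 : ℂ) 1,
      -(1 / 2) < (1 + z * deriv (deriv h) z / deriv h z).re := by
  obtain rfl : h = bshoutyLyzzaikH := funext hh
  intro z hz
  rw [mem_ball_zero_iff] at hz
  have hz1 : z ≠ 1 := by rintro rfl; simp at hz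
  have hform : 1 + z * deriv (deriv bshoutyLyzzaikH) z / deriv bshoutyLyzzaikH z
      = 3 * (1 - z)⁻¹ - 2 := by
    rw [deriv_deriv_bshoutyLyzzaikH hz1, deriv_bshoutyLyzzaikH hz1]
    field_simp
    ring
  have hre := one_half_lt_re_inv_one_sub hz
  rw [hform]
  simp only [sub_re, mul_re, re_ofNat, im_ofNat, zero_mul, sub_zero]
  linarith
end
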